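/- Let f'_m : ℝ^d → ℝ (m = 1,…,M) be twice continuously differentiable, L'-smooth and μ'-strongly convex with 0 < μ' ≤ λ/2. Define F_MX2(w,β) := (1/M)Σ_{m=1}^M f'_m(β_m) + (λ/(2M))Σ_{m=1}^M‖M^{-1/2}w − β_m‖². Then F_MX2 is jointly (μ'/(3M))-strongly convex, and the function f_m(w,β_m) := f'_m(β_m) + (λ/2)‖M^{-1/2}w − β_m‖² is (λ/M)-smooth w.r.t. w and (L'+λ)-smooth w.r.t. β_m. Moreover, if f'_m = (1/n)Σ_{i=1}^n f'_{m,i} with each f'_{m,i} convex and ℒ'-smooth, then f_{m,i}(w,β_m) := f'_{m,i}(β_m) + (λ/2)‖M^{-1/2}w − β_m‖² is jointly convex, (λ/M)-smooth w.r.t. w and (ℒ'+λ)-smooth w.r.t. β_m. -/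

import Mathlib

open Real Finset
noncomputable section

abbrev Vec (d : ℕ) : Type := EuclideanSpace ℝ (Fin d)

/-! The coupling `λ/2 ‖c • w - β‖²`, `c = 1/√M`, has gradient `λc (c • w - β)` in `w` and
`λ (β - c • w)` in `β`, so it adds `λc² = λ/M`, respectively `λ`, to the Lipschitz constant of
a gradient.
Joint strong convexity rests on the splitting
`λ/2 ‖u - β‖² + μ/3 ‖β‖² - μ/6 ‖u‖² = μ/6 ‖2β - u‖² + (λ/2 - μ/3) ‖u - β‖²`, whose right-hand
side is convex as soon as `μ ≤ 3λ/2`. With `u = w/√M`, the term `μ/(6M) ‖w‖² = μ/6 ‖u‖²` is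
spread evenly over the `M` summands of `F_MX2`, and each summand becomes
`(f'_m(β_m) - μ/2 ‖β_m‖²)/M` plus such a convex quadratic in `(u, β_m)`. -/

open Set InnerProductSpace

theorem norm_sq_withLp_prod_piLp {F : Type*} [SeminormedAddCommGroup F] {M : ℕ}
    (p : WithLp 2 (F × PiLp 2 fun _ : Fin M => F)) :
    ‖p‖ ^ 2 = ‖p.ofLp.1‖ ^ 2 + ∑ m, ‖p.ofLp.2 m‖ ^ 2 := by
  rw [WithLp.prod_norm_sq_eq_of_L2, PiLp.norm_sq_eq_of_L2]
  rfl

section Convexity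

variable {E : Type*} [AddCommGroup E] [Module ℝ E]

theorem convexOn_finset_sum {ι : Type*} {s : Set E} (hs : Convex ℝ s) (t : Finset ι)
    {f : ι → E → ℝ} (h : ∀ i ∈ t, ConvexOn ℝ s (f i)) :
    ConvexOn ℝ s fun x => ∑ i ∈ t, f i x := by
  have := Finset.sum_induction f (ConvexOn ℝ s) (fun _ _ hf hg => hf.add hg)
    (convexOn_const 0 hs) h
  rwa [Finset.sum_fn] at this

theorem convexOn_univ_norm_sq {E : Type*} [SeminormedAddCommGroup E] [NormedSpace ℝ E] :
    ConvexOn ℝ univ fun x : E => ‖x‖ ^ 2 :=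
  convexOn_univ_norm.pow (fun _ _ => norm_nonneg _) 2

variable {F : Type*} [NormedAddCommGroup F] [InnerProductSpace ℝ F]

theorem convexOn_add_half_mul_norm_smul_sub_sq {g : F → ℝ} (hg : ConvexOn ℝ univ g) {k : ℝ}
    (hk : 0 ≤ k) (c : ℝ) :
    ConvexOn ℝ univ fun q : F × F => g q.2 + k / 2 * ‖c • q.1 - q.2‖ ^ 2 :=
  (hg.comp_linearMap (LinearMap.snd ℝ F F)).add <|
    (convexOn_univ_norm_sq.comp_linearMap
      (c • LinearMap.fst ℝ F F - LinearMap.snd ℝ F F)).smul (by positivity)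

theorem convexOn_coupling_sub_norm_sq {f : F → ℝ} {μ lam : ℝ} (hμ : 0 ≤ μ)
    (hμlam : 2 * μ ≤ 3 * lam) (hf : ConvexOn ℝ univ fun x => f x - μ / 2 * ‖x‖ ^ 2) :
    ConvexOn ℝ univ fun q : F × F =>
      f q.2 + lam / 2 * ‖q.1 - q.2‖ ^ 2 - μ / 3 / 2 * (‖q.1‖ ^ 2 + ‖q.2‖ ^ 2) := by
  have split : ∀ u β : F,
      f β + lam / 2 * ‖u - β‖ ^ 2 - μ / 3 / 2 * (‖u‖ ^ 2 + ‖β‖ ^ 2) =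
        (f β - μ / 2 * ‖β‖ ^ 2) + μ / 6 * ‖(2 : ℝ) • β - u‖ ^ 2
          + (lam / 2 - μ / 3) * ‖u - β‖ ^ 2 := by
    intro u β
    rw [norm_sub_sq_real, norm_sub_sq_real, norm_smul, inner_smul_left, real_inner_comm]
    norm_num
    ring
  have hcoupling : 0 ≤ lam / 2 - μ / 3 := by linarith
  refine (((hf.comp_linearMap (LinearMap.snd ℝ F F)).add
    ((convexOn_univ_norm_sq.comp_linearMap
      ((2 : ℝ) • LinearMap.snd ℝ F F - LinearMap.fst ℝ F F)).smul
        (show 0 ≤ μ / 6 by positivity))).add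
    ((convexOn_univ_norm_sq.comp_linearMap
      (LinearMap.fst ℝ F F - LinearMap.snd ℝ F F)).smul hcoupling)).congr fun q _ => ?_
  exact (split q.1 q.2).symm

theorem convexOn_mixture_sub_norm_sq {M : ℕ} (hM : 0 < M) {f : Fin M → F → ℝ} {μ lam : ℝ}
    (hμ : 0 ≤ μ) (hμlam : 2 * μ ≤ 3 * lam)
    (hf : ∀ m, ConvexOn ℝ univ fun x => f m x - μ / 2 * ‖x‖ ^ 2) :
    ConvexOn ℝ univ fun p : WithLp 2 (F × PiLp 2 fun _ : Fin M => F) =>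
      (1 / (M : ℝ)) * ∑ m, f m (p.ofLp.2 m)
        + lam / (2 * M) * ∑ m, ‖(√M)⁻¹ • p.ofLp.1 - p.ofLp.2 m‖ ^ 2
        - μ / (3 * M) / 2 * ‖p‖ ^ 2 := by
  set c : ℝ := (√M)⁻¹
  have hMpos : (0 : ℝ) < M := Nat.cast_pos.mpr hM
  let embed (m : Fin M) : WithLp 2 (F × PiLp 2 fun _ : Fin M => F) →ₗ[ℝ] F × F :=
    (c • WithLp.fstₗ 2 ℝ F _).prod (PiLp.projₗ 2 _ m ∘ₗ WithLp.sndₗ 2 ℝ F _)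
  refine ((convexOn_finset_sum convex_univ univ fun m _ =>
    (convexOn_coupling_sub_norm_sq hμ hμlam (hf m)).comp_linearMap (embed m)).smul
      (show 0 ≤ 1 / (M : ℝ) by positivity)).congr fun p _ => ?_
  have hnorm_fst : ‖p.ofLp.1‖ ^ 2 = M * ‖c • p.ofLp.1‖ ^ 2 := by
    rw [norm_smul, mul_pow, norm_inv, Real.norm_of_nonneg (Real.sqrt_nonneg _), inv_pow,
      Real.sq_sqrt hMpos.le]
    field_simp
  have hembed : ∀ m, embed m p = (c • p.ofLp.1, p.ofLp.2 m) := fun m => rfl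
  simp only [smul_eq_mul, Function.comp_apply, hembed]
  rw [norm_sq_withLp_prod_piLp, hnorm_fst, Finset.sum_sub_distrib, Finset.sum_add_distrib,
    ← Finset.mul_sum, ← Finset.mul_sum, Finset.sum_add_distrib, Finset.sum_const,
    Finset.card_univ, Fintype.card_fin, nsmul_eq_mul]
  field_simp

end Convexity

section Gradient

variable {F : Type*} [NormedAddCommGroup F] [InnerProductSpace ℝ F] [CompleteSpace F]

theorem HasGradientAt.add {f g : F → ℝ} {f' g' x : F} (hf : HasGradientAt f f' x)
    (hg : HasGradientAt g g' x) : HasGradientAt (fun u => f u + g u) (f' + g') x := by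
  rw [hasGradientAt_iff_hasFDerivAt, map_add]
  exact hf.hasFDerivAt.add hg.hasFDerivAt

theorem hasGradientAt_half_mul_norm_smul_sub_sq (k c : ℝ) (b x : F) :
    HasGradientAt (fun u => k / 2 * ‖c • u - b‖ ^ 2) ((k * c) • (c • x - b)) x := by
  rw [hasGradientAt_iff_hasFDerivAt]
  refine ((((hasFDerivAt_id x).const_smul c).sub_const b).norm_sq.const_mul
    (k / 2)).congr_fderiv ?_
  ext v
  simp only [Pi.smul_apply, id_eq, map_sub, map_smul, ContinuousLinearMap.comp_smulₛₗ,
    ContinuousLinearMap.comp_id, smul_apply, sub_apply,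
    coe_innerSL_apply, smul_eq_mul, nsmul_eq_mul, toDual_apply_apply, RingHom.id_apply]
  ring

theorem norm_gradient_add_half_mul_norm_smul_sub_sq_sub_le {g : F → ℝ} {L k : ℝ}
    (hg : Differentiable ℝ g) (hL : ∀ x y, ‖gradient g x - gradient g y‖ ≤ L * ‖x - y‖)
    (hk : 0 ≤ k) (c : ℝ) (b x y : F) :
    ‖gradient (fun u => g u + k / 2 * ‖c • u - b‖ ^ 2) x
        - gradient (fun u => g u + k / 2 * ‖c • u - b‖ ^ 2) y‖ ≤ (L + k * c ^ 2) * ‖x - y‖ := by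
  have hgrad : ∀ z, gradient (fun u => g u + k / 2 * ‖c • u - b‖ ^ 2) z
      = gradient g z + (k * c) • (c • z - b) := fun z =>
    ((hg z).hasGradientAt.add (hasGradientAt_half_mul_norm_smul_sub_sq k c b z)).gradient
  rw [hgrad, hgrad]
  calc ‖gradient g x + (k * c) • (c • x - b) - (gradient g y + (k * c) • (c • y - b))‖
      = ‖(gradient g x - gradient g y) + (k * c ^ 2) • (x - y)‖ := by congr 1; module
    _ ≤ ‖gradient g x - gradient g y‖ + ‖(k * c ^ 2) • (x - y)‖ := norm_add_le _ _
    _ ≤ L * ‖x - y‖ + k * c ^ 2 * ‖x - y‖ := by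
      rw [norm_smul, Real.norm_of_nonneg (by positivity)]
      exact add_le_add_left (hL x y) _
    _ = (L + k * c ^ 2) * ‖x - y‖ := by ring

theorem norm_gradient_const_add_half_mul_norm_smul_sub_sq_sub_le (K : ℝ) {k : ℝ} (hk : 0 ≤ k)
    (c : ℝ) (b x y : F) :
    ‖gradient (fun u => K + k / 2 * ‖c • u - b‖ ^ 2) x
        - gradient (fun u => K + k / 2 * ‖c • u - b‖ ^ 2) y‖ ≤ k * c ^ 2 * ‖x - y‖ := by
  simpa using norm_gradient_add_half_mul_norm_smul_sub_sq_sub_le (g := fun _ => K) (L := 0)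
    (differentiable_const K) (fun _ _ => by simp [gradient_fun_const]) hk c b x y

theorem norm_gradient_add_half_mul_norm_sub_sq_sub_le {g : F → ℝ} {L k : ℝ}
    (hg : Differentiable ℝ g) (hL : ∀ x y, ‖gradient g x - gradient g y‖ ≤ L * ‖x - y‖)
    (hk : 0 ≤ k)
    (a x y : F) :
    ‖gradient (fun u => g u + k / 2 * ‖a - u‖ ^ 2) x
        - gradient (fun u => g u + k / 2 * ‖a - u‖ ^ 2) y‖ ≤ (L + k) * ‖x - y‖ := by
  simpa only [one_smul, norm_sub_rev _ a, one_pow, mul_one] using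
    norm_gradient_add_half_mul_norm_smul_sub_sq_sub_le hg hL hk 1 a x y

end Gradient

theorem stmt1_mixture_FL_smoothness_and_strong_convexity_general
    (d M n : ℕ) (hM : 0 < M)
    (L' μ' lam 𝓛' : ℝ) (hlam : 0 < lam) (hμ'pos : 0 < μ') (hμ' : μ' ≤ lam / 2)
    (f' : Fin M → Vec d → ℝ)
    (f'i : Fin M → Fin n → Vec d → ℝ)
    (hC2 : ∀ m, ContDiff ℝ 2 (f' m))
    (hsmooth : ∀ m, ∀ x y : Vec d,
      ‖gradient (f' m) x - gradient (f' m) y‖ ≤ L' * ‖x - y‖)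
    (hsc : ∀ m, ConvexOn ℝ Set.univ (fun x : Vec d => f' m x - μ' / 2 * ‖x‖ ^ 2))
    (hC2i : ∀ m i, ContDiff ℝ 2 (f'i m i))
    (hconvi : ∀ m i, ConvexOn ℝ Set.univ (f'i m i))
    (hsmoothi : ∀ m i, ∀ x y : Vec d,
      ‖gradient (f'i m i) x - gradient (f'i m i) y‖ ≤ 𝓛' * ‖x - y‖)
    -- the personalized objectives
    (fm : Fin M → Vec d → Vec d → ℝ)
    (hfm : ∀ m (w β : Vec d), fm m w β =
      f' m β + lam / 2 * ‖(Real.sqrt M)⁻¹ • w - β‖ ^ 2)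
    (fmi : Fin M → Fin n → Vec d → Vec d → ℝ)
    (hfmi : ∀ m i (w β : Vec d), fmi m i w β =
      f'i m i β + lam / 2 * ‖(Real.sqrt M)⁻¹ • w - β‖ ^ 2)
    (FMX2 : WithLp 2 (Vec d × PiLp 2 fun _ : Fin M => Vec d) → ℝ)
    (hF : ∀ p, FMX2 p = ((1 / (M : ℝ)) * ∑ m, f' m (p.ofLp.2 m))
      + (lam / (2 * M)) * ∑ m, ‖(Real.sqrt M)⁻¹ • p.ofLp.1 - p.ofLp.2 m‖ ^ 2) :
    -- F_MX2 is jointly (μ'/(3M))-strongly convex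
    (ConvexOn ℝ Set.univ fun p : WithLp 2 (Vec d × PiLp 2 fun _ : Fin M => Vec d) =>
        FMX2 p - μ' / (3 * M) / 2 * ‖p‖ ^ 2)
    -- f_m is (λ/M)-smooth w.r.t. w
    ∧ (∀ m (β w w' : Vec d),
        ‖gradient (fun u => fm m u β) w - gradient (fun u => fm m u β) w'‖
          ≤ lam / M * ‖w - w'‖)
    -- f_m is (L'+λ)-smooth w.r.t. β_m
    ∧ (∀ m (w β β' : Vec d),
        ‖gradient (fun u => fm m w u) β - gradient (fun u => fm m w u) β'‖
          ≤ (L' + lam) * ‖β - β'‖)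
    -- each f_{m,i} is jointly convex
    ∧ (∀ m i, ConvexOn ℝ Set.univ fun p : Vec d × Vec d => fmi m i p.1 p.2)
    -- f_{m,i} is (λ/M)-smooth w.r.t. w
    ∧ (∀ m i (β w w' : Vec d),
        ‖gradient (fun u => fmi m i u β) w - gradient (fun u => fmi m i u β) w'‖
          ≤ lam / M * ‖w - w'‖)
    -- f_{m,i} is (ℒ'+λ)-smooth w.r.t. β_m
    ∧ (∀ m i (w β β' : Vec d),
        ‖gradient (fun u => fmi m i w u) β - gradient (fun u => fmi m i w u) β'‖
          ≤ (𝓛' + lam) * ‖β - β'‖) := by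
  have hcoeff : lam * ((√M)⁻¹) ^ 2 = lam / M := by
    rw [inv_pow, Real.sq_sqrt (Nat.cast_nonneg M), div_eq_mul_inv]
  refine ⟨?_, fun m β w w' => ?_, fun m w β β' => ?_, fun m i => ?_,
    fun m i β w w' => ?_, fun m i w β β' => ?_⟩
  · simp only [hF]
    exact convexOn_mixture_sub_norm_sq hM hμ'pos.le (by linarith) hsc
  · simp only [hfm]
    exact (norm_gradient_const_add_half_mul_norm_smul_sub_sq_sub_le _ hlam.le _ β w w').trans_eq
      (by rw [hcoeff])
  · simp only [hfm]
    exact norm_gradient_add_half_mul_norm_sub_sq_sub_le ((hC2 m).differentiable two_ne_zero)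
      (hsmooth m) hlam.le _ β β'
  · simp only [hfmi]
    exact convexOn_add_half_mul_norm_smul_sub_sq (hconvi m i) hlam.le _
  · simp only [hfmi]
    exact (norm_gradient_const_add_half_mul_norm_smul_sub_sq_sub_le _ hlam.le _ β w w').trans_eq
      (by rw [hcoeff])
  · simp only [hfmi]
    exact norm_gradient_add_half_mul_norm_sub_sq_sub_le ((hC2i m i).differentiable two_ne_zero)
      (hsmoothi m i) hlam.le _ β β'

/-- Lemma 2 of the paper, together with its finite-sum part.
With `F_MX2(w,β) = (1/M)∑_m f'_m(β_m) + (λ/(2M))∑_m ‖M^{-1/2}w − β_m‖²`, under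
`0 < μ' ≤ λ/2`, the objective `F_MX2` is jointly `(μ'/(3M))`-strongly convex, the function
`f_m(w,β_m) = f'_m(β_m) + (λ/2)‖M^{-1/2}w − β_m‖²` is `(λ/M)`-smooth w.r.t. `w` and
`(L'+λ)`-smooth w.r.t. `β_m`, and each
`f_{m,i}(w,β_m) = f'_{m,i}(β_m) + (λ/2)‖M^{-1/2}w − β_m‖²` is jointly convex,
`(λ/M)`-smooth w.r.t. `w` and `(ℒ'+λ)`-smooth w.r.t. `β_m`. -/
theorem stmt1_mixture_FL_smoothness_and_strong_convexity
    (d M n : ℕ) (hM : 0 < M) (hn : 0 < n)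
    (L' μ' lam 𝓛' : ℝ) (hlam : 0 < lam) (hμ'pos : 0 < μ') (hμ' : μ' ≤ lam / 2)
    (f' : Fin M → Vec d → ℝ)
    (f'i : Fin M → Fin n → Vec d → ℝ)
    (hC2 : ∀ m, ContDiff ℝ 2 (f' m))
    (hsmooth : ∀ m, ∀ x y : Vec d,
      ‖gradient (f' m) x - gradient (f' m) y‖ ≤ L' * ‖x - y‖)
    (hsc : ∀ m, ConvexOn ℝ Set.univ (fun x : Vec d => f' m x - μ' / 2 * ‖x‖ ^ 2))
    (hsum : ∀ m x, f' m x = (1 / (n : ℝ)) * ∑ i, f'i m i x)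
    (hC2i : ∀ m i, ContDiff ℝ 2 (f'i m i))
    (hconvi : ∀ m i, ConvexOn ℝ Set.univ (f'i m i))
    (hsmoothi : ∀ m i, ∀ x y : Vec d,
      ‖gradient (f'i m i) x - gradient (f'i m i) y‖ ≤ 𝓛' * ‖x - y‖)
    -- the personalized objectives
    (fm : Fin M → Vec d → Vec d → ℝ)
    (hfm : ∀ m (w β : Vec d), fm m w β =
      f' m β + lam / 2 * ‖(Real.sqrt M)⁻¹ • w - β‖ ^ 2)
    (fmi : Fin M → Fin n → Vec d → Vec d → ℝ)
    (hfmi : ∀ m i (w β : Vec d), fmi m i w β =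
      f'i m i β + lam / 2 * ‖(Real.sqrt M)⁻¹ • w - β‖ ^ 2)
    (FMX2 : WithLp 2 (Vec d × PiLp 2 fun _ : Fin M => Vec d) → ℝ)
    (hF : ∀ p, FMX2 p = ((1 / (M : ℝ)) * ∑ m, f' m (p.ofLp.2 m))
      + (lam / (2 * M)) * ∑ m, ‖(Real.sqrt M)⁻¹ • p.ofLp.1 - p.ofLp.2 m‖ ^ 2) :
    -- F_MX2 is jointly (μ'/(3M))-strongly convex
    (ConvexOn ℝ Set.univ fun p : WithLp 2 (Vec d × PiLp 2 fun _ : Fin M => Vec d) =>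
        FMX2 p - μ' / (3 * M) / 2 * ‖p‖ ^ 2)
    -- f_m is (λ/M)-smooth w.r.t. w
    ∧ (∀ m (β w w' : Vec d),
        ‖gradient (fun u => fm m u β) w - gradient (fun u => fm m u β) w'‖
          ≤ lam / M * ‖w - w'‖)
    -- f_m is (L'+λ)-smooth w.r.t. β_m
    ∧ (∀ m (w β β' : Vec d),
        ‖gradient (fun u => fm m w u) β - gradient (fun u => fm m w u) β'‖
          ≤ (L' + lam) * ‖β - β'‖)
    -- each f_{m,i} is jointly convex
    ∧ (∀ m i, ConvexOn ℝ Set.univ fun p : Vec d × Vec d => fmi m i p.1 p.2)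
    -- f_{m,i} is (λ/M)-smooth w.r.t. w
    ∧ (∀ m i (β w w' : Vec d),
        ‖gradient (fun u => fmi m i u β) w - gradient (fun u => fmi m i u β) w'‖
          ≤ lam / M * ‖w - w'‖)
    -- f_{m,i} is (ℒ'+λ)-smooth w.r.t. β_m
    ∧ (∀ m i (w β β' : Vec d),
        ‖gradient (fun u => fmi m i w u) β - gradient (fun u => fmi m i w u) β'‖
          ≤ (𝓛' + lam) * ‖β - β'‖) :=
  stmt1_mixture_FL_smoothness_and_strong_convexity_general d M n hM L' μ' lam 𝓛' hlam hμ'pos hμ' f'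
    f'i hC2 hsmooth hsc hC2i hconvi hsmoothi fm hfm fmi hfmi FMX2 hF
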